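/- arXiv:2406.01960 — 6 statements merged into one kernel-verified Lean document; each statement's English description precedes it below -/
import Mathlib

section
/- There are K = K_b + K_m clients (K_m < K_b), clients 1,…,K_b benign and clients K_b+1,…,K malicious, each with a characterization vector v^(k) ∈ ℝ^H. Fix an integer p ≥ 1 and suppose there exist v̄ ∈ ℝ^H and r ≥ 0 such that ‖v^(k) − v̄‖_p ≤ r for every benign k ∈ {1,…,K_b}. Then for every benign client b ∈ {1,…,K_b}, the maliciousness score satisfies M(b) ≤ 2r. -/
open Finset

/-- The ℓ_p norm on `ℝ^H` for an integer `p ≥ 1`. -/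
noncomputable def lpNorm {H : ℕ} (p : ℕ) (x : Fin H → ℝ) : ℝ :=
  (∑ i, |x i| ^ p) ^ ((1 : ℝ) / p)

/-- The maliciousness score of client `k`: `1/t` times the sum of the `t` smallest values
among the distances `d k k'` for `k' ≠ k` (the minimum over size-`t` subsets of the sum). -/
noncomputable def malScore {K : ℕ} (d : Fin K → Fin K → ℝ) (t : ℕ) (k : Fin K) : ℝ :=
  sInf {x : ℝ | ∃ S : Finset (Fin K),
    S ⊆ Finset.univ.erase k ∧ S.card = t ∧ x = ∑ k' ∈ S, d k k'} / t

lemma lpNorm_nonneg {H : ℕ} (p : ℕ) (x : Fin H → ℝ) : 0 ≤ lpNorm p x :=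
  Real.rpow_nonneg (Finset.sum_nonneg fun i _ => pow_nonneg (abs_nonneg _) _) _

lemma lpNorm_rw {H : ℕ} (p : ℕ) (x : Fin H → ℝ) :
    lpNorm p x = (∑ i, |x i| ^ (p : ℝ)) ^ ((1 : ℝ) / p) := by
  unfold lpNorm
  congr 1
  exact Finset.sum_congr rfl fun i _ => (Real.rpow_natCast _ _).symm

lemma lpNorm_triangle {H : ℕ} (p : ℕ) (hp : 1 ≤ p) (x y : Fin H → ℝ) :
    lpNorm p (x + y) ≤ lpNorm p x + lpNorm p y := by
  rw [lpNorm_rw, lpNorm_rw, lpNorm_rw]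
  have hp' : (1 : ℝ) ≤ (p : ℝ) := by exact_mod_cast hp
  simpa using Real.Lp_add_le Finset.univ x y hp'

lemma lpNorm_sub_comm {H : ℕ} (p : ℕ) (x y : Fin H → ℝ) :
    lpNorm p (fun i => x i - y i) = lpNorm p (fun i => y i - x i) := by
  unfold lpNorm
  congr 1
  exact Finset.sum_congr rfl fun i _ => by rw [abs_sub_comm]

/-- with `K = K_b + K_m` clients (`K_m < K_b`; clients with index `< K_b`
benign), if all benign characterization vectors lie within ℓ_p distance `r` of `v̄`, then
every benign client `b` has maliciousness score `M(b) ≤ 2r`. -/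
theorem benign_malScore_le (H Kb Km : ℕ) (hKm : Km < Kb) (p : ℕ) (hp : 1 ≤ p)
    (v : Fin (Kb + Km) → Fin H → ℝ) (vbar : Fin H → ℝ) (r : ℝ) (hr : 0 ≤ r)
    (hben : ∀ k : Fin (Kb + Km), (k : ℕ) < Kb → lpNorm p (fun i => v k i - vbar i) ≤ r)
    (b : Fin (Kb + Km)) (hb : (b : ℕ) < Kb) :
    malScore (fun k1 k2 => lpNorm p (fun i => v k1 i - v k2 i)) (Kb - 1) b ≤ 2 * r := by
  set d : Fin (Kb + Km) → Fin (Kb + Km) → ℝ :=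
    fun k1 k2 => lpNorm p (fun i => v k1 i - v k2 i) with hd
  -- distances between benign clients are at most 2r
  have hdist : ∀ k : Fin (Kb + Km), (k : ℕ) < Kb → d b k ≤ 2 * r := by
    intro k hk
    have h1 : d b k ≤ lpNorm p (fun i => v b i - vbar i) +
        lpNorm p (fun i => vbar i - v k i) := by
      have := lpNorm_triangle p hp (fun i => v b i - vbar i) (fun i => vbar i - v k i)
      have heq : (fun i => v b i - vbar i) + (fun i => vbar i - v k i)
          = fun i => v b i - v k i := by funext i; simp only [Pi.add_apply]; ring
      rw [heq] at this
      exact this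
    have h2 : lpNorm p (fun i => vbar i - v k i) ≤ r := by
      rw [lpNorm_sub_comm]; exact hben k hk
    calc d b k ≤ _ + _ := h1
      _ ≤ r + r := add_le_add (hben b hb) h2
      _ = 2 * r := by ring
  -- the benign set
  set B : Finset (Fin (Kb + Km)) := Finset.univ.filter (fun k => (k : ℕ) < Kb) with hB
  have hBcard : B.card = Kb := by
    have : B = Finset.map (Fin.castAddEmb Km) Finset.univ := by
      ext k
      simp only [hB, Finset.mem_filter, Finset.mem_univ, true_and, Finset.mem_map,
        Fin.castAddEmb, Fin.castAdd]
      constructor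
      · intro hk
        refine ⟨⟨(k : ℕ), hk⟩, ?_⟩
        ext; simp
      · rintro ⟨j, rfl⟩
        simpa using j.isLt
    rw [this, Finset.card_map, Finset.card_univ, Fintype.card_fin]
  have hbB : b ∈ B := by simp [hB, hb]
  set S : Finset (Fin (Kb + Km)) := B.erase b with hS
  have hScard : S.card = Kb - 1 := by rw [hS, Finset.card_erase_of_mem hbB, hBcard]
  have hSsub : S ⊆ Finset.univ.erase b := by
    intro k hk
    rw [hS, Finset.mem_erase] at hk
    exact Finset.mem_erase.2 ⟨hk.1, Finset.mem_univ _⟩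
  have hSsum : ∑ k' ∈ S, d b k' ≤ (Kb - 1 : ℕ) * (2 * r) := by
    calc ∑ k' ∈ S, d b k' ≤ ∑ _k' ∈ S, (2 * r) := by
          refine Finset.sum_le_sum fun k hk => ?_
          have : k ∈ B := Finset.mem_of_mem_erase hk
          exact hdist k (by simpa [hB] using this)
      _ = (Kb - 1 : ℕ) * (2 * r) := by rw [Finset.sum_const, hScard, nsmul_eq_mul]
  -- the infimum is at most the sum over S, and is nonneg
  set T : Set ℝ := {x : ℝ | ∃ S : Finset (Fin (Kb + Km)),
    S ⊆ Finset.univ.erase b ∧ S.card = Kb - 1 ∧ x = ∑ k' ∈ S, d b k'} with hT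
  have hbdd : BddBelow T := by
    refine ⟨0, fun x hx => ?_⟩
    obtain ⟨S', -, -, rfl⟩ := hx
    exact Finset.sum_nonneg fun k _ => lpNorm_nonneg _ _
  have hmem : (∑ k' ∈ S, d b k') ∈ T := ⟨S, hSsub, hScard, rfl⟩
  have hinf_le : sInf T ≤ (Kb - 1 : ℕ) * (2 * r) :=
    le_trans (csInf_le hbdd hmem) hSsum
  have hinf_nonneg : 0 ≤ sInf T := le_csInf ⟨_, hmem⟩ fun x hx => by
    obtain ⟨S', -, -, rfl⟩ := hx
    exact Finset.sum_nonneg fun k _ => lpNorm_nonneg _ _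
  show sInf T / (Kb - 1 : ℕ) ≤ 2 * r
  rcases Nat.eq_zero_or_pos (Kb - 1) with h0 | hpos
  · rw [h0]
    simp
    positivity
  · have hpos' : (0 : ℝ) < (Kb - 1 : ℕ) := by exact_mod_cast hpos
    rw [div_le_iff₀ hpos']
    calc sInf T ≤ (Kb - 1 : ℕ) * (2 * r) := hinf_le
      _ = 2 * r * (Kb - 1 : ℕ) := by ring
end

section
/- There are K = K_b + K_m clients (1 ≤ K_m < K_b), clients 1,…,K_b benign and clients K_b+1,…,K malicious, each with a characterization vector v^(k) ∈ ℝ^H, and distances and maliciousness scores defined with a fixed integer p ≥ 1 and K_b−1 nearest neighbors. For any malicious client m ∈ {K_b+1,…,K}, any set N(m, K_b−1) of K_b−1 nearest neighbors of m contains at least K_b − K_m benign indices, and there exists a benign client b_b ∈ N(m, K_b−1) ∩ {1,…,K_b} with ‖v^(m) − v^(b_b)‖_p ≤ (K_b−1)·M(m)/(K_b−K_m). -/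
open Finset

/-- `S` is a set of `t` nearest neighbors of client `k`: it consists of `t` indices
`k' ≠ k` whose distances `d k k'` are the `t` smallest among `{d k k' : k' ≠ k}`. -/
def IsNearestNeighbors {K : ℕ} (d : Fin K → Fin K → ℝ) (k : Fin K) (t : ℕ)
    (S : Finset (Fin K)) : Prop :=
  S ⊆ Finset.univ.erase k ∧ S.card = t ∧
    ∀ k' ∈ S, ∀ k'', k'' ∉ S → k'' ≠ k → d k k' ≤ d k k''

/-- with `K = K_b + K_m` clients (`1 ≤ K_m < K_b`; clients with index
`< K_b` benign), for any malicious client `m`, any set of `K_b - 1` nearest neighbors of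
`m` contains at least `K_b - K_m` benign indices, and some benign client `b_b` in it
satisfies `‖v⁽ᵐ⁾ - v⁽ᵇᵇ⁾‖_p ≤ (K_b - 1)·M(m)/(K_b - K_m)`. -/
theorem nearest_neighbors_benign (H Kb Km : ℕ) (hKm1 : 1 ≤ Km) (hKm : Km < Kb)
    (p : ℕ) (hp : 1 ≤ p)
    (v : Fin (Kb + Km) → Fin H → ℝ)
    (m : Fin (Kb + Km)) (hm : Kb ≤ (m : ℕ))
    (S : Finset (Fin (Kb + Km)))
    (hS : IsNearestNeighbors
      (fun k1 k2 => lpNorm p (fun i => v k1 i - v k2 i)) m (Kb - 1) S) :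
    Kb - Km ≤ (S.filter (fun k : Fin (Kb + Km) => (k : ℕ) < Kb)).card ∧
    ∃ b ∈ S, (b : ℕ) < Kb ∧
      lpNorm p (fun i => v m i - v b i) ≤
        ((Kb : ℝ) - 1) *
          malScore (fun k1 k2 => lpNorm p (fun i => v k1 i - v k2 i)) (Kb - 1) m /
          ((Kb : ℝ) - (Km : ℝ)) := by
  classical
  obtain ⟨hSsub, hScard, hSnn⟩ := hS
  set d : Fin (Kb + Km) → Fin (Kb + Km) → ℝ :=
    fun k1 k2 => lpNorm p (fun i => v k1 i - v k2 i) with hd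
  have hdnn : ∀ k1 k2, 0 ≤ d k1 k2 := by
    intro k1 k2
    show (0:ℝ) ≤ lpNorm p (fun i => v k1 i - v k2 i)
    unfold lpNorm
    positivity
  -- the number of malicious indices is Km
  have hMcount : (univ.filter (fun k : Fin (Kb + Km) => ¬ (k : ℕ) < Kb)).card = Km := by
    have himg : univ.filter (fun k : Fin (Kb + Km) => ¬ (k : ℕ) < Kb)
        = (univ : Finset (Fin Km)).image (Fin.natAdd Kb) := by
      ext k
      simp only [mem_filter, mem_univ, true_and, mem_image, Fin.natAdd, not_lt]
      constructor
      · intro hk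
        exact ⟨⟨(k : ℕ) - Kb, by omega⟩, by ext; simp; omega⟩
      · rintro ⟨j, rfl⟩
        simp
    rw [himg, Finset.card_image_of_injective _ ?_, card_univ, Fintype.card_fin]
    intro a b hab
    have := congrArg (fun x : Fin (Kb + Km) => (x : ℕ)) hab
    simp [Fin.natAdd] at this
    exact Fin.ext this
  -- counting lemma: any (Kb-1)-subset of erase m has at least Kb - Km benign elements
  have hcount : ∀ T : Finset (Fin (Kb + Km)), T ⊆ univ.erase m → T.card = Kb - 1 →
      Kb - Km ≤ (T.filter (fun k : Fin (Kb + Km) => (k : ℕ) < Kb)).card := by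
    intro T hTsub hTcard
    have h1 : T.filter (fun k : Fin (Kb + Km) => ¬ (k : ℕ) < Kb)
        ⊆ (univ.filter (fun k : Fin (Kb + Km) => ¬ (k : ℕ) < Kb)).erase m := by
      intro k hk
      simp only [mem_filter] at hk
      have hk' := hTsub hk.1
      simp only [mem_erase, mem_filter, mem_univ, true_and] at hk' ⊢
      exact ⟨hk'.1, hk.2⟩
    have h2 : ((univ.filter (fun k : Fin (Kb + Km) => ¬ (k : ℕ) < Kb)).erase m).card
        = Km - 1 := by
      rw [Finset.card_erase_of_mem (by simp only [mem_filter, mem_univ, true_and, not_lt]; exact hm), hMcount]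
    have h3 := Finset.card_le_card h1
    have h4 := Finset.card_filter_add_card_filter_not
      (s := T) (p := fun k : Fin (Kb + Km) => (k : ℕ) < Kb)
    omega
  have hfirst := hcount S hSsub hScard
  refine ⟨hfirst, ?_⟩
  -- pick minimal benign element of S
  have hBne : (S.filter (fun k : Fin (Kb + Km) => (k : ℕ) < Kb)).Nonempty := by
    rw [← Finset.card_pos]; omega
  obtain ⟨b, hbB, hbmin⟩ := Finset.exists_min_image _ (fun k => d m k) hBne
  simp only [mem_filter] at hbB
  refine ⟨b, hbB.1, hbB.2, ?_⟩
  -- the key lower bound on every admissible sum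
  set A : Set ℝ := {x : ℝ | ∃ T : Finset (Fin (Kb + Km)),
    T ⊆ Finset.univ.erase m ∧ T.card = Kb - 1 ∧ x = ∑ k' ∈ T, d m k'} with hA
  have hAne : A.Nonempty := ⟨∑ k' ∈ S, d m k', S, hSsub, hScard, rfl⟩
  have hbound : ∀ x ∈ A, ((Kb : ℝ) - Km) * d m b ≤ x := by
    rintro x ⟨T, hTsub, hTcard, rfl⟩
    have hkey : ∀ t ∈ T.filter (fun k : Fin (Kb + Km) => (k : ℕ) < Kb), d m b ≤ d m t := by
      intro t ht
      simp only [mem_filter] at ht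
      by_cases htS : t ∈ S
      · exact hbmin t (by simp [mem_filter, htS, ht.2])
      · have htm : t ≠ m := (mem_erase.mp (hTsub ht.1)).1
        exact hSnn b hbB.1 t htS htm
    calc ((Kb : ℝ) - Km) * d m b
        ≤ ((T.filter (fun k : Fin (Kb + Km) => (k : ℕ) < Kb)).card : ℝ) * d m b := by
          apply mul_le_mul_of_nonneg_right _ (hdnn m b)
          have := hcount T hTsub hTcard
          have : ((Kb - Km : ℕ) : ℝ) ≤ ((T.filter (fun k : Fin (Kb + Km) => (k : ℕ) < Kb)).card : ℝ) := by
            exact_mod_cast this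
          have hcast : ((Kb - Km : ℕ) : ℝ) = (Kb : ℝ) - Km := by
            push_cast [Nat.cast_sub hKm.le]; ring
          linarith
      _ = ∑ t ∈ T.filter (fun k : Fin (Kb + Km) => (k : ℕ) < Kb), d m b := by
          rw [Finset.sum_const, nsmul_eq_mul]
      _ ≤ ∑ t ∈ T.filter (fun k : Fin (Kb + Km) => (k : ℕ) < Kb), d m t :=
          Finset.sum_le_sum hkey
      _ ≤ ∑ k' ∈ T, d m k' := by
          apply Finset.sum_le_sum_of_subset_of_nonneg (Finset.filter_subset _ _)
          intro i _ _; exact hdnn m i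
  have hsInf : ((Kb : ℝ) - Km) * d m b ≤ sInf A := le_csInf hAne hbound
  -- relate malScore to sInf A
  have hKb2 : 2 ≤ Kb := by omega
  have hmal : malScore d (Kb - 1) m = sInf A / ((Kb : ℝ) - 1) := by
    unfold malScore
    congr 1
    push_cast [Nat.cast_sub (by omega : 1 ≤ Kb)]
    ring
  have hKb1pos : (0:ℝ) < (Kb : ℝ) - 1 := by
    have : (2:ℝ) ≤ (Kb : ℝ) := by exact_mod_cast hKb2
    linarith
  have hKmpos : (0:ℝ) < (Kb : ℝ) - (Km : ℝ) := by
    have : (Km : ℝ) < (Kb : ℝ) := by exact_mod_cast hKm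
    linarith
  show d m b ≤ ((Kb : ℝ) - 1) * malScore d (Kb - 1) m / ((Kb : ℝ) - (Km : ℝ))
  rw [hmal, mul_div_cancel₀ _ (ne_of_gt hKb1pos)]
  rw [le_div_iff₀ hKmpos]
  linarith [hsInf]
end

section
/- (Robust aggregation, homogeneous case.) There are K = K_b + K_m clients (1 ≤ K_m < K_b), clients 1,…,K_b benign and clients K_b+1,…,K malicious; client k reports a characterization vector v^(k) ∈ ℝ^H and a positive integer sample size n_k. Fix an integer p ≥ 1 and suppose ‖v^(k) − v̄‖_p ≤ r for every benign k ∈ {1,…,K_b}, where v̄ ∈ ℝ^H and r ≥ 0. Let B be a set of K_b client indices whose maliciousness scores are the K_b smallest, and let N_B = Σ_{k∈B} n_k. Then ‖Σ_{k∈B} (n_k/N_B)·v^(k) − v̄‖_p ≤ (1 + (N_m/n_b)·(2/(1−τ)))·r, where τ = K_m/K_b, N_m = Σ_{k=K_b+1}^{K} n_k, and n_b = min_{k∈{1,…,K_b}} n_k. -/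
open Finset

/-! A benign client has `K_b - 1` other benign clients within distance `2r`, so its score is at
most `2r`. Among any `K_b - 1` other clients, a malicious client at distance `D > r` from `v̄` sees
at least `K_b - K_m` benign ones, each at distance at least `D - r`, so its score is at least
`(K_b - K_m)(D - r)/(K_b - 1)`. As `|B| = K_b`, a malicious client in `B` scores no more than some
benign client outside `B`, whence `D ≤ r + 2r/(1 - τ)`. By convexity of the norm, the aggregation
error is then at most `r` plus `2r/(1 - τ)` times the weight of the malicious clients in `B`, and
that weight is at most `N_m / n_b` because `B` also contains a benign client. -/

open scoped ENNReal

lemma Finset.card_add_card_lt_card_inter_add {α : Type*} [Fintype α] [DecidableEq α]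
    {A S : Finset α} {k : α} (hk : k ∉ A) (hS : S ⊆ univ.erase k) :
    #S + #A < #(S ∩ A) + Fintype.card α := by
  have hsub : S \ A ⊆ (univ \ A).erase k := fun j hj => by
    rw [mem_sdiff] at hj
    exact mem_erase.2 ⟨ne_of_mem_erase (hS hj.1), mem_sdiff.2 ⟨mem_univ j, hj.2⟩⟩
  have hdiff := card_le_card hsub
  rw [card_erase_of_mem (by simpa), card_univ_sdiff] at hdiff
  have := card_sdiff_add_card_inter S A
  have := card_lt_univ_of_notMem hk
  omega

lemma Finset.exists_mem_notMem_of_card_le_of_mem_notMem {α : Type*} [DecidableEq α]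
    {A B : Finset α} (hAB : #B ≤ #A) {k : α} (hkB : k ∈ B) (hkA : k ∉ A) :
    ∃ k' ∈ A, k' ∉ B := by
  obtain ⟨k', hk'A, hk'B⟩ :=
    exists_mem_notMem_of_card_lt_card ((card_erase_lt_of_mem hkB).trans_le hAB)
  exact ⟨k', hk'A, fun h => hk'B (mem_erase.2 ⟨ne_of_mem_of_not_mem hk'A hkA, h⟩)⟩

lemma lpNorm_eq_norm_toLp {H p : ℕ} (hp : p ≠ 0) (x : Fin H → ℝ) :
    lpNorm p x = ‖WithLp.toLp (p : ℝ≥0∞) x‖ := by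
  rw [PiLp.norm_eq_sum (by simpa [Nat.pos_iff_ne_zero] using hp)]
  simp [lpNorm, Real.rpow_natCast]

section malScore

variable {K : ℕ} {d : Fin K → Fin K → ℝ} {t : ℕ} {k : Fin K}

lemma malScore_le_sum_div (hd : ∀ k', 0 ≤ d k k') {S : Finset (Fin K)}
    (hS : S ⊆ univ.erase k) (hcard : #S = t) :
    malScore d t k ≤ (∑ k' ∈ S, d k k') / t := by
  refine div_le_div_of_nonneg_right (csInf_le ⟨0, ?_⟩ ⟨S, hS, hcard, rfl⟩) t.cast_nonneg
  rintro _ ⟨S', -, -, rfl⟩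
  exact sum_nonneg fun k' _ => hd k'

lemma div_le_malScore {a : ℝ} (ht : t < K)
    (h : ∀ S ⊆ univ.erase k, #S = t → a ≤ ∑ k' ∈ S, d k k') :
    a / t ≤ malScore d t k := by
  obtain ⟨S, hS, hcard⟩ := exists_subset_card_eq (s := univ.erase k) (n := t) (by simp; omega)
  refine div_le_div_of_nonneg_right (le_csInf ⟨_, S, hS, hcard, rfl⟩ ?_) t.cast_nonneg
  rintro _ ⟨S', hS', hcard', rfl⟩
  exact h S' hS' hcard'

end malScore

section Robust

variable {E : Type*} [SeminormedAddCommGroup E] {K : ℕ} {x : Fin K → E} {c : E} {r : ℝ}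
  {A : Finset (Fin K)}

lemma malScore_le_two_mul_of_mem (hA : ∀ j ∈ A, ‖x j - c‖ ≤ r) {k : Fin K} (hk : k ∈ A)
    {t : ℕ} (ht : t < #A) :
    malScore (fun a b => ‖x a - x b‖) t k ≤ 2 * r := by
  have hr : 0 ≤ r := (norm_nonneg _).trans (hA k hk)
  obtain ⟨S, hS, hcard⟩ :=
    exists_subset_card_eq (s := A.erase k) (n := t) (by rw [card_erase_of_mem hk]; omega)
  have hSk : S ⊆ univ.erase k := hS.trans (erase_subset_erase _ (subset_univ _))
  refine (malScore_le_sum_div (fun _ => norm_nonneg _) hSk hcard).trans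
    (div_le_of_le_mul₀ t.cast_nonneg (by positivity) ?_)
  calc ∑ j ∈ S, ‖x k - x j‖ ≤ #S • (2 * r) := sum_le_card_nsmul _ _ _ fun j hj => ?_
    _ = 2 * r * t := by rw [nsmul_eq_mul, hcard, mul_comm]
  linarith [norm_sub_le_norm_sub_add_norm_sub (x k) c (x j), norm_sub_rev c (x j), hA k hk,
    hA j (mem_of_mem_erase (hS hj))]

lemma mul_sub_div_le_malScore (hA : ∀ j ∈ A, ‖x j - c‖ ≤ r) {k : Fin K} (hk : k ∉ A)
    {t : ℕ} (ht : t < K) (hr : r ≤ ‖x k - c‖) :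
    ((t + #A + 1 - K : ℕ) : ℝ) * (‖x k - c‖ - r) / t ≤
      malScore (fun a b => ‖x a - x b‖) t k := by
  refine div_le_malScore ht fun S hS hcard => ?_
  have hinter := card_add_card_lt_card_inter_add hk hS
  rw [Fintype.card_fin] at hinter
  calc ((t + #A + 1 - K : ℕ) : ℝ) * (‖x k - c‖ - r) ≤ #(S ∩ A) • (‖x k - c‖ - r) := by
        rw [nsmul_eq_mul]
        gcongr
        omega
    _ ≤ ∑ j ∈ S ∩ A, ‖x k - x j‖ := card_nsmul_le_sum _ _ _ fun j hj => ?_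
    _ ≤ ∑ j ∈ S, ‖x k - x j‖ :=
        sum_le_sum_of_subset_of_nonneg inter_subset_left fun _ _ _ => norm_nonneg _
  linarith [norm_sub_le_norm_sub_add_norm_sub (x k) (x j) c, hA j (mem_inter.1 hj).2]

lemma norm_sub_le_of_malScore_le (hA : ∀ j ∈ A, ‖x j - c‖ ≤ r) {m : ℕ} (hK : K ≤ #A + m)
    (hm : m < #A) {k k' : Fin K} (hk : k ∉ A) (hk' : k' ∈ A)
    (hle : malScore (fun a b => ‖x a - x b‖) (#A - 1) k ≤
      malScore (fun a b => ‖x a - x b‖) (#A - 1) k') :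
    ‖x k - c‖ ≤ r + 2 / (1 - m / #A) * r := by
  have hr : 0 ≤ r := (norm_nonneg _).trans (hA k' hk')
  have hAK : #A < K := by simpa using card_lt_univ_of_notMem hk
  have hmA : (m : ℝ) < #A := by exact_mod_cast hm
  have hA0 : (0 : ℝ) < #A := by exact_mod_cast (m.zero_le.trans_lt hm)
  have hρ : 2 / (1 - m / #A) * r = 2 * #A * r / (#A - m) := by field_simp
  rw [hρ]
  rcases le_or_gt ‖x k - c‖ r with h | h
  · have : 0 ≤ 2 * #A * r / (#A - m) := div_nonneg (by positivity) (by linarith)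
    linarith
  have hlow := mul_sub_div_le_malScore hA hk (t := #A - 1) (by omega) h.le
  have hup := malScore_le_two_mul_of_mem hA hk' (t := #A - 1) (by omega)
  have hcast : ((#A - 1 + #A + 1 - K : ℕ) : ℝ) = 2 * #A - K := by
    rw [show #A - 1 + #A + 1 - K = 2 * #A - K by omega, Nat.cast_sub (by omega)]
    push_cast; ring
  have hpred : ((#A - 1 : ℕ) : ℝ) = #A - 1 := by rw [Nat.cast_sub (by omega)]; simp
  have ht : (0 : ℝ) < #A - 1 := by rw [← hpred]; exact_mod_cast (by omega : 0 < #A - 1)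
  have hKm : (K : ℝ) ≤ #A + m := by exact_mod_cast hK
  rw [hcast, hpred, div_le_iff₀ ht] at hlow
  have hscore : (2 * #A - K) * (‖x k - c‖ - r) ≤ 2 * r * (#A - 1) :=
    hlow.trans (mul_le_mul_of_nonneg_right (hle.trans hup) ht.le)
  rw [← sub_le_iff_le_add', le_div_iff₀ (by linarith)]
  nlinarith [mul_le_mul_of_nonneg_left (by linarith : (#A - m : ℝ) ≤ 2 * #A - K)
    (by linarith : 0 ≤ ‖x k - c‖ - r)]

end Robust

lemma norm_sum_smul_sub_le {E ι : Type*} [SeminormedAddCommGroup E] [NormedSpace ℝ E]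
    (s : Finset ι) {w : ι → ℝ} (x : ι → E) (c : E) (hw : ∀ k ∈ s, 0 ≤ w k)
    (hw1 : ∑ k ∈ s, w k = 1) :
    ‖∑ k ∈ s, w k • x k - c‖ ≤ ∑ k ∈ s, w k * ‖x k - c‖ := by
  have : ∑ k ∈ s, w k • x k - c = ∑ k ∈ s, w k • (x k - c) := by
    simp only [smul_sub, sum_sub_distrib, ← sum_smul, hw1, one_smul]
  rw [this]
  refine (norm_sum_le _ _).trans_eq (sum_congr rfl fun k hk => ?_)
  rw [norm_smul, Real.norm_of_nonneg (hw k hk)]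

lemma sum_mul_le_add_sum_filter_mul {ι : Type*} (s : Finset ι) (P : ι → Prop) [DecidablePred P]
    {w f : ι → ℝ} {r ρ : ℝ} (hw : ∀ k ∈ s, 0 ≤ w k) (hw1 : ∑ k ∈ s, w k = 1)
    (hgood : ∀ k ∈ s, ¬ P k → f k ≤ r) (hbad : ∀ k ∈ s, P k → f k ≤ r + ρ) :
    ∑ k ∈ s, w k * f k ≤ r + (∑ k ∈ s with P k, w k) * ρ := by
  calc ∑ k ∈ s, w k * f k ≤ ∑ k ∈ s, (w k * r + if P k then w k * ρ else 0) := by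
        refine sum_le_sum fun k hk => ?_
        split_ifs with h
        · nlinarith [hbad k hk h, hw k hk]
        · nlinarith [hgood k hk h, hw k hk]
    _ = r + (∑ k ∈ s with P k, w k) * ρ := by
        rw [sum_add_distrib, ← sum_mul, hw1, ← sum_filter, sum_mul, one_mul]

lemma sum_filter_div_sum_le {ι : Type*} (s : Finset ι) (P : ι → Prop) [DecidablePred P]
    {n : ι → ℝ} (hn : ∀ k, 0 ≤ n k) {N b : ℝ} (hb : 0 < b) {j : ι} (hj : j ∈ s)
    (hbj : b ≤ n j) (hN : ∑ k ∈ s with P k, n k ≤ N) :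
    ∑ k ∈ s with P k, n k / ∑ k' ∈ s, n k' ≤ N / b := by
  rw [← sum_div]
  exact div_le_div₀ ((sum_nonneg fun k _ => hn k).trans hN) hN hb
    (hbj.trans (single_le_sum (fun k _ => hn k) hj))

theorem norm_sum_smul_sub_le_of_malScore_le {E : Type*} [SeminormedAddCommGroup E]
    [NormedSpace ℝ E] {K : ℕ} {x : Fin K → E} {c : E} {r : ℝ} {A B : Finset (Fin K)}
    (hA : ∀ j ∈ A, ‖x j - c‖ ≤ r) {m : ℕ} (hK : K ≤ #A + m) (hm : m < #A) (hBcard : #B = #A)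
    (hBmin : ∀ k ∈ B, ∀ k' ∉ B, malScore (fun a b => ‖x a - x b‖) (#A - 1) k ≤
      malScore (fun a b => ‖x a - x b‖) (#A - 1) k')
    {n : Fin K → ℕ} {nb : ℝ} (hnb0 : 0 < nb) (hnb : ∀ k ∈ A, nb ≤ n k) :
    ‖∑ k ∈ B, ((n k : ℝ) / ∑ k' ∈ B, (n k' : ℝ)) • x k - c‖ ≤
      r + (∑ k with k ∉ A, (n k : ℝ)) / nb * (2 / (1 - m / #A) * r) := by
  have hmal : ∀ k ∈ B, k ∉ A → ‖x k - c‖ ≤ r + 2 / (1 - m / #A) * r := fun k hkB hkA =>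
    have ⟨k', hk'A, hk'B⟩ := exists_mem_notMem_of_card_le_of_mem_notMem hBcard.le hkB hkA
    norm_sub_le_of_malScore_le hA hK hm hkA hk'A (hBmin k hkB k' hk'B)
  obtain ⟨j, hjB, hjA⟩ : ∃ j ∈ B, j ∉ univ \ A :=
    exists_mem_notMem_of_card_lt_card (by rw [card_univ_sdiff, hBcard]; simp; omega)
  replace hjA : j ∈ A := by simpa using hjA
  have hw : ∀ k ∈ B, 0 ≤ (n k : ℝ) / ∑ k' ∈ B, (n k' : ℝ) := fun k _ => by positivity
  have hw1 : ∑ k ∈ B, (n k : ℝ) / ∑ k' ∈ B, (n k' : ℝ) = 1 := by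
    refine (sum_div _ _ _).symm.trans (div_self (ne_of_gt ?_))
    exact hnb0.trans_le ((hnb j hjA).trans (single_le_sum (fun k _ => Nat.cast_nonneg (n k)) hjB))
  have hmass : ∑ k ∈ B with k ∉ A, (n k : ℝ) / ∑ k' ∈ B, (n k' : ℝ) ≤
      (∑ k with k ∉ A, (n k : ℝ)) / nb :=
    sum_filter_div_sum_le B _ (fun k => (n k).cast_nonneg) hnb0 hjB (hnb j hjA)
      (sum_le_sum_of_subset_of_nonneg (filter_subset_filter _ (subset_univ B)) (by simp))
  have hρ : 0 ≤ 2 / (1 - m / #A) * r := by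
    have : (m : ℝ) / #A ≤ 1 := div_le_one_of_le₀ (by exact_mod_cast hm.le) (by positivity)
    exact mul_nonneg (div_nonneg zero_le_two (by linarith)) ((norm_nonneg _).trans (hA j hjA))
  calc _ ≤ _ := norm_sum_smul_sub_le B x c hw hw1
    _ ≤ r + (∑ k ∈ B with k ∉ A, (n k : ℝ) / ∑ k' ∈ B, (n k' : ℝ)) * (2 / (1 - m / #A) * r) :=
        sum_mul_le_add_sum_filter_mul B (· ∉ A) hw hw1 (fun k _ hk => hA k (not_not.1 hk)) hmal
    _ ≤ _ := by gcongr

theorem robust_aggregation_homogeneous_general (H Kb Km : ℕ) (hKm : Km < Kb)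
    (p : ℕ) (hp : 1 ≤ p)
    (v : Fin (Kb + Km) → Fin H → ℝ) (n : Fin (Kb + Km) → ℕ) (hn : ∀ k, 0 < n k)
    (vbar : Fin H → ℝ) (r : ℝ)
    (hben : ∀ k : Fin (Kb + Km), (k : ℕ) < Kb → lpNorm p (fun i => v k i - vbar i) ≤ r)
    (B : Finset (Fin (Kb + Km))) (hBcard : B.card = Kb)
    (hBmin : ∀ k ∈ B, ∀ k' ∉ B,
      malScore (fun k1 k2 => lpNorm p (fun i => v k1 i - v k2 i)) (Kb - 1) k ≤
        malScore (fun k1 k2 => lpNorm p (fun i => v k1 i - v k2 i)) (Kb - 1) k')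
    (τ Nm nb : ℝ)
    (hτ : τ = (Km : ℝ) / (Kb : ℝ))
    (hNm : Nm = ∑ k ∈ Finset.univ.filter (fun k : Fin (Kb + Km) => Kb ≤ (k : ℕ)), (n k : ℝ))
    (hnb : nb = ((sInf {a : ℕ | ∃ k : Fin (Kb + Km), (k : ℕ) < Kb ∧ n k = a} : ℕ) : ℝ)) :
    lpNorm p (fun i =>
        (∑ k ∈ B, ((n k : ℝ) / (∑ k' ∈ B, (n k' : ℝ))) * v k i) - vbar i) ≤
      (1 + (Nm / nb) * (2 / (1 - τ))) * r := by
  have : Fact (1 ≤ (p : ℝ≥0∞)) := ⟨by exact_mod_cast hp⟩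
  set A := univ.filter fun k : Fin (Kb + Km) => (k : ℕ) < Kb
  have hAcard : #A = Kb := by simp [A, Fin.card_filter_val_lt]
  have hdist : ∀ a b : Fin H → ℝ,
      lpNorm p (fun i => a i - b i) = ‖WithLp.toLp p a - WithLp.toLp p b‖ :=
    fun a b => lpNorm_eq_norm_toLp (by omega) _
  have hagg : WithLp.toLp p (fun i => ∑ k ∈ B, (n k : ℝ) / (∑ k' ∈ B, (n k' : ℝ)) * v k i) =
      ∑ k ∈ B, ((n k : ℝ) / ∑ k' ∈ B, (n k' : ℝ)) • WithLp.toLp p (v k) := by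
    ext i; simp
  simp only [hdist] at hben hBmin ⊢
  rw [hagg]
  set S := {a | ∃ k : Fin (Kb + Km), (k : ℕ) < Kb ∧ n k = a}
  have hnbA : ∀ k ∈ A, nb ≤ n k := fun k hk => by
    rw [hnb]; exact_mod_cast Nat.sInf_le (s := S) ⟨k, (mem_filter.1 hk).2, rfl⟩
  have hnb0 : 0 < nb := by
    obtain ⟨k, -, hk⟩ := Nat.sInf_mem (s := S) ⟨_, ⟨0, by omega⟩, by simp; omega, rfl⟩
    rw [hnb, ← hk]; exact_mod_cast hn k
  have hNmA : Nm = ∑ k with k ∉ A, (n k : ℝ) := by rw [hNm]; simp [A]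
  have := norm_sum_smul_sub_le_of_malScore_le (x := fun k => WithLp.toLp p (v k)) (A := A)
    (fun k hk => hben k (mem_filter.1 hk).2) (m := Km) (by simp [hAcard]) (by omega)
    (hBcard.trans hAcard.symm) (by rw [hAcard]; exact hBmin) hnb0 hnbA
  rw [← hNmA, hAcard, ← hτ] at this
  linarith

/-- robust aggregation, homogeneous case: with `K = K_b + K_m` clients
(`1 ≤ K_m < K_b`; clients with index `< K_b` benign), each reporting a vector `v⁽ᵏ⁾` and a
positive sample size `n_k`, if all benign vectors lie within ℓ_p distance `r` of `v̄` and
`B` is a set of `K_b` clients whose maliciousness scores are the `K_b` smallest, then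
`‖∑_{k∈B} (n_k/N_B)·v⁽ᵏ⁾ - v̄‖_p ≤ (1 + (N_m/n_b)·(2/(1-τ)))·r`, where `τ = K_m/K_b`,
`N_m` is the total malicious sample size and `n_b` the minimal benign sample size. -/
theorem robust_aggregation_homogeneous (H Kb Km : ℕ) (hKm1 : 1 ≤ Km) (hKm : Km < Kb)
    (p : ℕ) (hp : 1 ≤ p)
    (v : Fin (Kb + Km) → Fin H → ℝ) (n : Fin (Kb + Km) → ℕ) (hn : ∀ k, 0 < n k)
    (vbar : Fin H → ℝ) (r : ℝ) (hr : 0 ≤ r)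
    (hben : ∀ k : Fin (Kb + Km), (k : ℕ) < Kb → lpNorm p (fun i => v k i - vbar i) ≤ r)
    (B : Finset (Fin (Kb + Km))) (hBcard : B.card = Kb)
    (hBmin : ∀ k ∈ B, ∀ k' ∉ B,
      malScore (fun k1 k2 => lpNorm p (fun i => v k1 i - v k2 i)) (Kb - 1) k ≤
        malScore (fun k1 k2 => lpNorm p (fun i => v k1 i - v k2 i)) (Kb - 1) k')
    (τ Nm nb : ℝ)
    (hτ : τ = (Km : ℝ) / (Kb : ℝ))
    (hNm : Nm = ∑ k ∈ Finset.univ.filter (fun k : Fin (Kb + Km) => Kb ≤ (k : ℕ)), (n k : ℝ))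
    (hnb : nb = ((sInf {a : ℕ | ∃ k : Fin (Kb + Km), (k : ℕ) < Kb ∧ n k = a} : ℕ) : ℝ)) :
    lpNorm p (fun i =>
        (∑ k ∈ B, ((n k : ℝ) / (∑ k' ∈ B, (n k' : ℝ))) * v k i) - vbar i) ≤
      (1 + (Nm / nb) * (2 / (1 - τ))) * r :=
  robust_aggregation_homogeneous_general H Kb Km hKm p hp v n hn vbar r hben B hBcard hBmin τ Nm nb
    hτ hNm hnb
end

section
/- There are K = K_b + K_m clients (1 ≤ K_m), clients 1,…,K_b benign and clients K_b+1,…,K malicious, each with a characterization vector v^(k) ∈ ℝ^H. Let K̃_b be an integer with K_m < K̃_b ≤ K_b and K̃_b ≥ 2, and define maliciousness scores using Euclidean distances and K̃_b − 1 nearest neighbors. Suppose there exist μ ∈ ℝ^H and r ≥ 0 with ‖v^(k) − μ‖₂ ≤ r for every benign k ∈ {1,…,K_b}. Then every benign client b ∈ {1,…,K_b} satisfies M(b) ≤ 2r. -/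
open Finset

/-- with `K = K_b + K_m` clients (`1 ≤ K_m`; clients with index `< K_b`
benign), `K̃_b` an integer with `K_m < K̃_b ≤ K_b` and `K̃_b ≥ 2`, maliciousness scores
computed from Euclidean distances with `K̃_b - 1` nearest neighbors, if all benign
vectors lie within Euclidean distance `r` of `μ`, then every benign client `b` satisfies
`M(b) ≤ 2r`. -/
theorem benign_malScore_le_euclidean (H Kb Km Ktb : ℕ) (hKm1 : 1 ≤ Km)
    (h1 : Km < Ktb) (h2 : Ktb ≤ Kb) (h3 : 2 ≤ Ktb)
    (v : Fin (Kb + Km) → EuclideanSpace ℝ (Fin H))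
    (μ : EuclideanSpace ℝ (Fin H)) (r : ℝ) (hr : 0 ≤ r)
    (hben : ∀ k : Fin (Kb + Km), (k : ℕ) < Kb → ‖v k - μ‖ ≤ r)
    (b : Fin (Kb + Km)) (hb : (b : ℕ) < Kb) :
    malScore (fun k1 k2 => ‖v k1 - v k2‖) (Ktb - 1) b ≤ 2 * r := by
  set t := Ktb - 1 with ht
  have htpos : 0 < t := by omega
  -- The benign clients other than b
  set T : Finset (Fin (Kb + Km)) :=
    (Finset.univ.filter (fun k : Fin (Kb + Km) => (k : ℕ) < Kb)).erase b with hT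
  have hcardT : t ≤ T.card := by
    have hinj : ∀ i : Fin Kb, ((⟨(i : ℕ), lt_of_lt_of_le i.2 (Nat.le_add_right _ _)⟩ :
        Fin (Kb + Km)) : ℕ) < Kb := fun i => i.2
    have hKbcard : (Finset.univ.filter (fun k : Fin (Kb + Km) => (k : ℕ) < Kb)).card = Kb := by
      rw [Finset.card_filter]
      rw [Fin.sum_univ_eq_sum_range (fun i => if i < Kb then 1 else 0)]
      rw [← Finset.card_filter]
      have : (Finset.range (Kb + Km)).filter (fun i => i < Kb) = Finset.range Kb := by
        ext i; simp; omega
      rw [this, Finset.card_range]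
    have := Finset.card_erase_of_mem (a := b)
      (s := Finset.univ.filter (fun k : Fin (Kb + Km) => (k : ℕ) < Kb))
      (by simp [hb])
    rw [hT, this, hKbcard]
    omega
  obtain ⟨S, hST, hScard⟩ := Finset.exists_subset_card_eq hcardT
  have hSsub : S ⊆ Finset.univ.erase b := by
    intro x hx
    have := hST hx
    rw [hT] at this
    simp only [Finset.mem_erase, Finset.mem_filter] at this ⊢
    exact ⟨this.1, Finset.mem_univ x⟩
  have hmem : (∑ k' ∈ S, ‖v b - v k'‖) ∈ {x : ℝ | ∃ S : Finset (Fin (Kb + Km)),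
      S ⊆ Finset.univ.erase b ∧ S.card = t ∧ x = ∑ k' ∈ S, ‖v b - v k'‖} :=
    ⟨S, hSsub, hScard, rfl⟩
  have hbdd : BddBelow {x : ℝ | ∃ S : Finset (Fin (Kb + Km)),
      S ⊆ Finset.univ.erase b ∧ S.card = t ∧ x = ∑ k' ∈ S, ‖v b - v k'‖} := by
    refine ⟨0, fun x hx => ?_⟩
    obtain ⟨S', _, _, rfl⟩ := hx
    exact Finset.sum_nonneg fun _ _ => norm_nonneg _
  have hsum : (∑ k' ∈ S, ‖v b - v k'‖) ≤ t * (2 * r) := by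
    calc (∑ k' ∈ S, ‖v b - v k'‖) ≤ ∑ k' ∈ S, (2 * r) := by
          refine Finset.sum_le_sum fun k' hk' => ?_
          have hk'ben : (k' : ℕ) < Kb := by
            have := hST hk'
            rw [hT] at this
            simp only [Finset.mem_erase, Finset.mem_filter] at this
            exact this.2.2
          calc ‖v b - v k'‖ = ‖(v b - μ) + (μ - v k')‖ := by rw [sub_add_sub_cancel]
            _ ≤ ‖v b - μ‖ + ‖μ - v k'‖ := norm_add_le _ _
            _ = ‖v b - μ‖ + ‖v k' - μ‖ := by rw [norm_sub_rev μ (v k')]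
            _ ≤ r + r := add_le_add (hben b hb) (hben k' hk'ben)
            _ = 2 * r := by ring
      _ = t * (2 * r) := by rw [Finset.sum_const, hScard]; simp [mul_comm]
  have hinf : sInf {x : ℝ | ∃ S : Finset (Fin (Kb + Km)),
      S ⊆ Finset.univ.erase b ∧ S.card = t ∧ x = ∑ k' ∈ S, ‖v b - v k'‖} ≤ t * (2 * r) :=
    le_trans (csInf_le hbdd hmem) hsum
  unfold malScore
  rw [div_le_iff₀ (by exact_mod_cast htpos)]
  calc sInf _ ≤ t * (2 * r) := hinf
    _ = 2 * r * t := by ring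
end

section
/- There are K = K_b + K_m clients (1 ≤ K_m), clients 1,…,K_b benign and clients K_b+1,…,K malicious, each with a characterization vector v^(k) ∈ ℝ^H. Let K̃_b be an integer with K_m < K̃_b ≤ K_b and K̃_b ≥ 2, and define maliciousness scores using Euclidean distances and K̃_b − 1 nearest neighbors. Suppose there exist μ ∈ ℝ^H and 0 ≤ r ≤ d such that ‖v^(k) − μ‖₂ ≤ r for every benign k ∈ {1,…,K_b} and ‖v^(m) − μ‖₂ ≥ d for every malicious m ∈ {K_b+1,…,K}. Then every malicious client m satisfies M(m) ≥ ((K̃_b − K_m)/(K̃_b − 1))·(d − r). -/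
open Finset

/-- with `K = K_b + K_m` clients (`1 ≤ K_m`; clients with index `< K_b`
benign), `K̃_b` an integer with `K_m < K̃_b ≤ K_b` and `K̃_b ≥ 2`, maliciousness scores
computed from Euclidean distances with `K̃_b - 1` nearest neighbors, if all benign
vectors lie within Euclidean distance `r` of `μ` and all malicious vectors are at
Euclidean distance at least `d` from `μ` (`0 ≤ r ≤ d`), then every malicious client `m`
satisfies `M(m) ≥ ((K̃_b - K_m)/(K̃_b - 1))·(d - r)`. -/
theorem malicious_malScore_ge (H Kb Km Ktb : ℕ) (hKm1 : 1 ≤ Km)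
    (h1 : Km < Ktb) (h2 : Ktb ≤ Kb) (h3 : 2 ≤ Ktb)
    (v : Fin (Kb + Km) → EuclideanSpace ℝ (Fin H))
    (μ : EuclideanSpace ℝ (Fin H)) (r d : ℝ) (hr0 : 0 ≤ r) (hrd : r ≤ d)
    (hben : ∀ k : Fin (Kb + Km), (k : ℕ) < Kb → ‖v k - μ‖ ≤ r)
    (hmal : ∀ m : Fin (Kb + Km), Kb ≤ (m : ℕ) → d ≤ ‖v m - μ‖)
    (m : Fin (Kb + Km)) (hm : Kb ≤ (m : ℕ)) :
    ((Ktb : ℝ) - (Km : ℝ)) / ((Ktb : ℝ) - 1) * (d - r) ≤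
      malScore (fun k1 k2 => ‖v k1 - v k2‖) (Ktb - 1) m := by
  set t := Ktb - 1 with ht
  set c : ℝ := ((Ktb - Km : ℕ) : ℝ) * (d - r) with hc
  have hdr : (0:ℝ) ≤ d - r := by linarith
  -- the set in malScore
  set A : Set ℝ := {x : ℝ | ∃ S : Finset (Fin (Kb + Km)),
    S ⊆ Finset.univ.erase m ∧ S.card = t ∧ x = ∑ k' ∈ S, ‖v m - v k'‖} with hA
  -- nonempty
  have hcard : t ≤ (Finset.univ.erase m).card := by
    rw [Finset.card_erase_of_mem (Finset.mem_univ m), Finset.card_univ,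
      Fintype.card_fin]
    omega
  obtain ⟨S0, hS0sub, hS0card⟩ := Finset.exists_subset_card_eq hcard
  have hne : A.Nonempty := ⟨_, S0, hS0sub, hS0card, rfl⟩
  -- lower bound for each element
  have hlb : ∀ x ∈ A, c ≤ x := by
    rintro x ⟨S, hSsub, hScard, rfl⟩
    -- benign part
    set B := S.filter (fun k : Fin (Kb + Km) => (k : ℕ) < Kb) with hB
    set M := S.filter (fun k : Fin (Kb + Km) => ¬ (k : ℕ) < Kb) with hM
    have hMcard : M.card ≤ Km - 1 := by
      have hinj : Set.InjOn (fun k : Fin (Kb + Km) => (k : ℕ) - Kb) M := by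
        intro a ha b hb hab
        simp only [hM, Finset.coe_filter, Set.mem_setOf_eq] at ha hb
        have hab' : (a:ℕ) - Kb = (b:ℕ) - Kb := hab
        have : (a:ℕ) = (b:ℕ) := by omega
        exact Fin.ext this
      have himg : M.image (fun k : Fin (Kb + Km) => (k : ℕ) - Kb) ⊆
          (Finset.range Km).erase ((m : ℕ) - Kb) := by
        intro y hy
        simp only [Finset.mem_image] at hy
        obtain ⟨a, ha, rfl⟩ := hy
        simp only [hM, Finset.mem_filter] at ha
        have ham : a ≠ m := Finset.ne_of_mem_erase (hSsub ha.1)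
        have haKb : Kb ≤ (a:ℕ) := by omega
        have haval : (a:ℕ) < Kb + Km := a.isLt
        rw [Finset.mem_erase, Finset.mem_range]
        constructor
        · intro hcontra
          apply ham
          apply Fin.ext
          omega
        · omega
      calc M.card = (M.image (fun k : Fin (Kb + Km) => (k : ℕ) - Kb)).card := by
            rw [Finset.card_image_of_injOn hinj]
        _ ≤ ((Finset.range Km).erase ((m : ℕ) - Kb)).card := Finset.card_le_card himg
        _ = Km - 1 := by
            rw [Finset.card_erase_of_mem, Finset.card_range]
            rw [Finset.mem_range]; omega
    have hBM : B.card + M.card = S.card := Finset.card_filter_add_card_filter_not _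
    have hBcard : Ktb - Km ≤ B.card := by omega
    have hterm : ∀ k ∈ B, d - r ≤ ‖v m - v k‖ := by
      intro k hk
      simp only [hB, Finset.mem_filter] at hk
      have h1 := hben k hk.2
      have h2 := hmal m hm
      have h3 : ‖v m - μ‖ ≤ ‖v m - v k‖ + ‖v k - μ‖ := by
        have := norm_sub_le_norm_sub_add_norm_sub (v m) (v k) μ
        linarith
      linarith
    have hnn : ∀ k ∈ S, (0:ℝ) ≤ ‖v m - v k‖ := fun k _ => norm_nonneg _
    calc c = ((Ktb - Km : ℕ) : ℝ) * (d - r) := rfl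
      _ ≤ (B.card : ℝ) * (d - r) := by
          apply mul_le_mul_of_nonneg_right _ hdr
          exact_mod_cast hBcard
      _ = ∑ _k ∈ B, (d - r) := by rw [Finset.sum_const, nsmul_eq_mul]
      _ ≤ ∑ k ∈ B, ‖v m - v k‖ := Finset.sum_le_sum hterm
      _ ≤ ∑ k ∈ S, ‖v m - v k‖ :=
          Finset.sum_le_sum_of_subset_of_nonneg (Finset.filter_subset _ _)
            (fun k hk _ => hnn k hk)
  have hsInf : c ≤ sInf A := le_csInf hne hlb
  -- conclude
  have htpos : (0:ℝ) < (t : ℕ) := by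
    have : 1 ≤ t := by omega
    exact_mod_cast this
  unfold malScore
  rw [show ((Ktb : ℝ) - (Km : ℝ)) / ((Ktb : ℝ) - 1) * (d - r) = c / (t : ℝ) by
    rw [hc, ht]
    push_cast [Nat.cast_sub (le_of_lt h1), Nat.cast_sub (by omega : 1 ≤ Ktb)]
    ring]
  gcongr
end

section
/- (Deterministic separation of maliciousness scores.) There are K = K_b + K_m clients (1 ≤ K_m), clients 1,…,K_b benign and clients K_b+1,…,K malicious, each with a characterization vector v^(k) ∈ ℝ^H. Let K̃_b be an integer with K_m < K̃_b ≤ K_b and K̃_b ≥ 2, and define maliciousness scores using Euclidean distances and K̃_b − 1 nearest neighbors. Let d > 0 and suppose there exists μ ∈ ℝ^H with ‖v^(m) − μ‖₂ ≥ d for every malicious m ∈ {K_b+1,…,K}, and ‖v^(k) − μ‖₂ ≤ r for every benign k ∈ {1,…,K_b}, where 0 ≤ r ≤ (K̃_b − K_m)·d/(3K̃_b − K_m − 2). Then M(m) ≥ M(b) for every malicious client m ∈ {K_b+1,…,K} and every benign client b ∈ {1,…,K_b}. -/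
/-! Benign vectors lie in the ball of radius `r` about `μ`, so a benign client has at least
`K̃_b - 1` other clients within `2r`, whence `M(b) ≤ 2r`. Any `K̃_b - 1` clients other than a
malicious `m` include at most `K_m - 1` malicious ones, so at least `K̃_b - K_m` benign ones, each
at distance at least `d - r` from `v m`; hence `M(m) ≥ (K̃_b - K_m)(d - r)/(K̃_b - 1)`. The bound
on `r` is exactly `2r(K̃_b - 1) ≤ (K̃_b - K_m)(d - r)`. -/

open Finset

namespace Finset

theorem card_lt_card_sdiff_add_card {α : Type*} [DecidableEq α] {s t : Finset α} {a : α}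
    (hs : a ∉ s) (ht : a ∈ t) : #s < #(s \ t) + #t := by
  rw [card_sdiff_add_card]
  exact card_lt_card ((ssubset_iff_of_subset subset_union_left).2 ⟨a, mem_union_right s ht, hs⟩)

end Finset

section malScore

variable {K t : ℕ} {d : Fin K → Fin K → ℝ} {k : Fin K} {c : ℝ}

theorem malScore_le_of_subset {S : Finset (Fin K)} (hS : S ⊆ univ.erase k) (hcard : #S = t)
    (ht : 0 < t) (hle : ∀ k' ∈ S, d k k' ≤ c) : malScore d t k ≤ c := by
  have hbdd : BddBelow {x : ℝ | ∃ S : Finset (Fin K),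
      S ⊆ univ.erase k ∧ #S = t ∧ x = ∑ k' ∈ S, d k k'} :=
    ((Set.finite_range fun S : Finset (Fin K) => ∑ k' ∈ S, d k k').subset
      (by rintro _ ⟨S, -, -, rfl⟩; exact ⟨S, rfl⟩)).bddBelow
  rw [malScore, div_le_iff₀ (by exact_mod_cast ht)]
  calc sInf _ ≤ ∑ k' ∈ S, d k k' := csInf_le hbdd ⟨S, hS, hcard, rfl⟩
    _ ≤ ∑ _k' ∈ S, c := sum_le_sum hle
    _ = c * t := by rw [sum_const, hcard, nsmul_eq_mul, mul_comm]

theorem le_malScore_of_forall_sum (ht : 0 < t) (htK : t < K)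
    (hle : ∀ S ⊆ univ.erase k, #S = t → t * c ≤ ∑ k' ∈ S, d k k') : c ≤ malScore d t k := by
  have hne : {x : ℝ | ∃ S : Finset (Fin K),
      S ⊆ univ.erase k ∧ #S = t ∧ x = ∑ k' ∈ S, d k k'}.Nonempty := by
    obtain ⟨S, hS, hcard⟩ := exists_subset_card_eq (s := univ.erase k) (n := t)
      (by rw [card_erase_of_mem (mem_univ k), card_univ, Fintype.card_fin]; omega)
    exact ⟨_, S, hS, hcard, rfl⟩
  rw [malScore, le_div_iff₀ (by exact_mod_cast ht)]
  refine le_csInf hne ?_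
  rintro _ ⟨S, hS, hcard, rfl⟩
  rw [mul_comm]
  exact hle S hS hcard

end malScore

section Cluster

variable {E : Type*} [PseudoMetricSpace E] {K t : ℕ} {v : Fin K → E} {μ : E}
  {A : Finset (Fin K)} {r δ : ℝ}

theorem malScore_dist_le_two_mul {b : Fin K} (hb : b ∉ A) (ht : 0 < t) (htK : t + #A < K)
    (hr : ∀ k ∉ A, dist (v k) μ ≤ r) :
    malScore (fun k₁ k₂ => dist (v k₁) (v k₂)) t b ≤ 2 * r := by
  obtain ⟨S, hS, hcard⟩ := exists_subset_card_eq (s := Aᶜ.erase b) (n := t)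
    (by rw [card_erase_of_mem (mem_compl.2 hb), card_compl, Fintype.card_fin]; omega)
  refine malScore_le_of_subset (hS.trans (erase_subset_erase _ (subset_univ _))) hcard ht ?_
  intro k hk
  calc dist (v b) (v k) ≤ dist (v b) μ + dist (v k) μ := dist_triangle_right _ _ _
    _ ≤ r + r := add_le_add (hr b hb) (hr k (mem_compl.1 (mem_of_mem_erase (hS hk))))
    _ = 2 * r := (two_mul r).symm

theorem le_malScore_dist {m : Fin K} (hm : m ∈ A) (ht : 0 < t) (htK : t < K) (hrδ : r ≤ δ)
    (hδ : δ ≤ dist (v m) μ) (hr : ∀ k ∉ A, dist (v k) μ ≤ r) :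
    ((t + 1 - #A : ℕ) : ℝ) * (δ - r) / t ≤ malScore (fun k₁ k₂ => dist (v k₁) (v k₂)) t m := by
  refine le_malScore_of_forall_sum ht htK fun S hS hcard => ?_
  have hcount : t + 1 - #A ≤ #(S \ A) := by
    have := card_lt_card_sdiff_add_card (fun h => notMem_erase m univ (hS h)) hm
    omega
  have hfar : ∀ k ∈ S \ A, δ - r ≤ dist (v m) (v k) := fun k hk => by
    have := hr k (mem_sdiff.1 hk).2
    linarith [dist_triangle (v m) (v k) μ]
  calc (t : ℝ) * (((t + 1 - #A : ℕ) : ℝ) * (δ - r) / t) = ((t + 1 - #A : ℕ) : ℝ) * (δ - r) := by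
        field_simp
    _ ≤ #(S \ A) * (δ - r) := by gcongr
    _ ≤ ∑ k ∈ S \ A, dist (v m) (v k) := by
        rw [← nsmul_eq_mul]
        exact card_nsmul_le_sum _ _ _ hfar
    _ ≤ ∑ k ∈ S, dist (v m) (v k) :=
        sum_le_sum_of_subset_of_nonneg sdiff_subset fun _ _ _ => dist_nonneg

end Cluster

theorem two_mul_le_of_le_mul_div {T M r d : ℝ} (hM : 1 ≤ M) (hMT : M < T)
    (hr : r ≤ (T - M) * d / (3 * T - M - 2)) : 2 * r ≤ (T - M) * (d - r) / (T - 1) := by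
  rw [le_div_iff₀ (by linarith)]
  rw [le_div_iff₀ (by linarith)] at hr
  linarith

theorem le_of_le_mul_div {T M r d : ℝ} (hM : 1 ≤ M) (hMT : M < T) (hr0 : 0 ≤ r)
    (hr : r ≤ (T - M) * d / (3 * T - M - 2)) : r ≤ d := by
  rw [le_div_iff₀ (by linarith)] at hr
  nlinarith

theorem malScore_separation_general (H Kb Km Ktb : ℕ)
    (h1 : Km < Ktb) (h2 : Ktb ≤ Kb)
    (v : Fin (Kb + Km) → EuclideanSpace ℝ (Fin H))
    (μ : EuclideanSpace ℝ (Fin H)) (d : ℝ)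
    (hmal : ∀ m : Fin (Kb + Km), Kb ≤ (m : ℕ) → d ≤ ‖v m - μ‖)
    (r : ℝ)
    (hr1 : r ≤ ((Ktb : ℝ) - (Km : ℝ)) * d / (3 * (Ktb : ℝ) - (Km : ℝ) - 2))
    (hben : ∀ k : Fin (Kb + Km), (k : ℕ) < Kb → ‖v k - μ‖ ≤ r) :
    ∀ m b : Fin (Kb + Km), Kb ≤ (m : ℕ) → (b : ℕ) < Kb →
      malScore (fun k1 k2 => ‖v k1 - v k2‖) (Ktb - 1) b ≤
        malScore (fun k1 k2 => ‖v k1 - v k2‖) (Ktb - 1) m := by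
  intro m b hm hb
  have hcardA : #({i | Kb ≤ (i : ℕ)} : Finset (Fin (Kb + Km))) = Km := by
    have := card_filter_add_card_filter_not (s := univ) (fun i : Fin (Kb + Km) => (i : ℕ) < Kb)
    simp only [Fin.card_filter_val_lt, min_eq_right (Nat.le_add_right Kb Km), card_univ,
      Fintype.card_fin, not_lt] at this
    omega
  set A : Finset (Fin (Kb + Km)) := {i | Kb ≤ (i : ℕ)}
  have hKm : 1 ≤ Km := by omega
  have hbenA : ∀ k ∉ A, dist (v k) μ ≤ r := fun k hk => by
    simpa [A, dist_eq_norm] using hben k (by simpa [A] using hk)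
  have hbA : b ∉ A := by simpa [A] using hb
  have hmA : m ∈ A := by simpa [A] using hm
  have hsep := two_mul_le_of_le_mul_div (by exact_mod_cast hKm) (by exact_mod_cast h1) hr1
  have hrd := le_of_le_mul_div (by exact_mod_cast hKm) (by exact_mod_cast h1)
    (dist_nonneg.trans (hbenA b hbA)) hr1
  simp only [← dist_eq_norm]
  calc malScore _ (Ktb - 1) b ≤ 2 * r :=
        malScore_dist_le_two_mul hbA (by omega) (by omega) hbenA
    _ ≤ ((Ktb : ℝ) - Km) * (d - r) / (Ktb - 1) := hsep
    _ = ((Ktb - 1 + 1 - #A : ℕ) : ℝ) * (d - r) / ((Ktb - 1 : ℕ) : ℝ) := by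
        rw [hcardA, Nat.sub_add_cancel (by omega), Nat.cast_sub h1.le, Nat.cast_sub (by omega)]
        norm_num
    _ ≤ malScore _ (Ktb - 1) m :=
        le_malScore_dist hmA (by omega) (by omega) hrd
          (by simpa [dist_eq_norm] using hmal m hm) hbenA

/-- deterministic separation of maliciousness scores: with
`K = K_b + K_m` clients (`1 ≤ K_m`; clients with index `< K_b` benign), `K̃_b` an
integer with `K_m < K̃_b ≤ K_b` and `K̃_b ≥ 2`, maliciousness scores computed from
Euclidean distances with `K̃_b - 1` nearest neighbors, `d > 0`, if every malicious
vector is at Euclidean distance at least `d` from `μ` and every benign vector is within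
distance `r` of `μ` with `0 ≤ r ≤ (K̃_b - K_m)·d/(3K̃_b - K_m - 2)`, then
`M(m) ≥ M(b)` for every malicious `m` and benign `b`. -/
theorem malScore_separation (H Kb Km Ktb : ℕ) (hKm1 : 1 ≤ Km)
    (h1 : Km < Ktb) (h2 : Ktb ≤ Kb) (h3 : 2 ≤ Ktb)
    (v : Fin (Kb + Km) → EuclideanSpace ℝ (Fin H))
    (μ : EuclideanSpace ℝ (Fin H)) (d : ℝ) (hd : 0 < d)
    (hmal : ∀ m : Fin (Kb + Km), Kb ≤ (m : ℕ) → d ≤ ‖v m - μ‖)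
    (r : ℝ) (hr0 : 0 ≤ r)
    (hr1 : r ≤ ((Ktb : ℝ) - (Km : ℝ)) * d / (3 * (Ktb : ℝ) - (Km : ℝ) - 2))
    (hben : ∀ k : Fin (Kb + Km), (k : ℕ) < Kb → ‖v k - μ‖ ≤ r) :
    ∀ m b : Fin (Kb + Km), Kb ≤ (m : ℕ) → (b : ℕ) < Kb →
      malScore (fun k1 k2 => ‖v k1 - v k2‖) (Ktb - 1) b ≤
        malScore (fun k1 k2 => ‖v k1 - v k2‖) (Ktb - 1) m :=
  malScore_separation_general H Kb Km Ktb h1 h2 v μ d hmal r hr1 hben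
end
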